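/- arXiv:2008.12332 — 2 statements merged into one kernel-verified Lean document; each statement's English description precedes it below -/
import Mathlib

section
/- Let κ : R_+ → [0,1] be L_κ-Lipschitz with κ_γ(z',z) = κ(ρ(z',z)/γ) for a metric ρ and γ > 0. Given z_0,…,z_T, set s_T(z) = Σ_t κ_γ(z_t,z) and suppose s_T(z) > 0 and s_T(z_i) > 0. Then Σ_{t=0}^T | κ_γ(z_t,z)/s_T(z) − κ_γ(z_t,z_i)/s_T(z_i) | ≤ (2(T+1)/s_T(z_i)) (L_κ/γ) ρ(z, z_i). -/
/-- Lipschitz-type bound on the normalized Nadarya–Watson weights: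
`Σ_t |κ_γ(z_t,z)/s_T(z) − κ_γ(z_t,z_i)/s_T(z_i)| ≤ (2(T+1)/s_T(z_i)) (L_κ/γ) ρ(z,z_i)`. -/
theorem stmt_3 {Z : Type*} [MetricSpace Z] (κ : ℝ → ℝ) (Lκ γ : ℝ) (hγ : 0 < γ)
    (hrange : ∀ u, 0 ≤ u → κ u ∈ Set.Icc (0:ℝ) 1)
    (hLip : ∀ u v, 0 ≤ u → 0 ≤ v → |κ u - κ v| ≤ Lκ * |u - v|)
    (T : ℕ) (zs : Fin (T + 1) → Z) (z zi : Z)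
    (s : Z → ℝ) (hs : ∀ w, s w = ∑ t, κ (dist (zs t) w / γ))
    (hsz : 0 < s z) (hszi : 0 < s zi) :
    ∑ t, |κ (dist (zs t) z / γ) / s z - κ (dist (zs t) zi / γ) / s zi|
      ≤ (2 * (T + 1) / s zi) * (Lκ / γ) * dist z zi := by
  have hLκ : 0 ≤ Lκ := by
    have h := hLip 0 1 le_rfl zero_le_one
    have := abs_nonneg (κ 0 - κ 1)
    simp at h
    linarith
  set a : Fin (T+1) → ℝ := fun t => κ (dist (zs t) z / γ) with ha_def
  set b : Fin (T+1) → ℝ := fun t => κ (dist (zs t) zi / γ) with hb_def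
  have ha : ∀ t, 0 ≤ a t := fun t => (hrange _ (by positivity)).1
  have hb : ∀ t, 0 ≤ b t := fun t => (hrange _ (by positivity)).1
  set A := s z with hA_def
  set B := s zi with hB_def
  have hA : A = ∑ t, a t := hs z
  have hB : B = ∑ t, b t := hs zi
  set C := Lκ / γ * dist z zi with hC_def
  have hC : 0 ≤ C := by positivity
  have key : ∀ t, |a t - b t| ≤ C := by
    intro t
    calc |a t - b t| ≤ Lκ * |dist (zs t) z / γ - dist (zs t) zi / γ| :=
          hLip _ _ (by positivity) (by positivity)
      _ = Lκ / γ * |dist (zs t) z - dist (zs t) zi| := by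
          rw [div_sub_div_same, abs_div, abs_of_pos hγ]; ring
      _ ≤ C := by
          rw [hC_def]
          refine mul_le_mul_of_nonneg_left ?_ (by positivity)
          rw [dist_comm (zs t) z, dist_comm (zs t) zi]
          exact abs_dist_sub_le z zi (zs t)
  have hsum : ∑ t, |a t - b t| ≤ (T+1) * C := by
    calc ∑ t, |a t - b t| ≤ ∑ _t : Fin (T+1), C :=
          Finset.sum_le_sum (fun t _ => key t)
      _ = (T+1) * C := by
          simp [Finset.sum_const, Finset.card_univ, nsmul_eq_mul]
  have hBA : |B - A| ≤ (T+1) * C := by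
    have h1 : |B - A| ≤ ∑ t, |b t - a t| := by
      rw [hA, hB, ← Finset.sum_sub_distrib]
      exact Finset.abs_sum_le_sum_abs _ _
    have h2 : ∑ t, |b t - a t| = ∑ t, |a t - b t| := by
      simp [abs_sub_comm]
    linarith
  have hterm : ∀ t, |a t / A - b t / B| ≤ |a t - b t| / B + a t * |B - A| / (A * B) := by
    intro t
    have hid : a t / A - b t / B = (a t - b t) / B + a t * (B - A) / (A * B) := by
      field_simp
      ring
    rw [hid]
    calc |(a t - b t) / B + a t * (B - A) / (A * B)|
        ≤ |(a t - b t) / B| + |a t * (B - A) / (A * B)| := abs_add_le _ _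
      _ = |a t - b t| / B + a t * |B - A| / (A * B) := by
          rw [abs_div, abs_div, abs_mul, abs_mul, abs_of_pos hszi, abs_of_pos hsz,
            abs_of_nonneg (ha t)]
  have hmain : ∑ t, |a t / A - b t / B|
      ≤ (∑ t, |a t - b t|) / B + |B - A| / B := by
    calc ∑ t, |a t / A - b t / B|
        ≤ ∑ t, (|a t - b t| / B + a t * |B - A| / (A * B)) :=
          Finset.sum_le_sum (fun t _ => hterm t)
      _ = (∑ t, |a t - b t|) / B + (∑ t, a t) * |B - A| / (A * B) := by
          rw [Finset.sum_add_distrib, ← Finset.sum_div, ← Finset.sum_div, ← Finset.sum_mul]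
      _ = (∑ t, |a t - b t|) / B + |B - A| / B := by
          rw [← hA, mul_div_mul_left _ _ (ne_of_gt hsz)]
  calc ∑ t, |a t / A - b t / B|
      ≤ (∑ t, |a t - b t|) / B + |B - A| / B := hmain
    _ ≤ ((T+1) * C) / B + ((T+1) * C) / B := by gcongr
    _ = (2 * (T + 1) / B) * (Lκ / γ) * dist z zi := by
        rw [hC_def]
        field_simp
        ring
end

section
/- Let X be a random vector in R^p with density f ≤ (2r̄)^{-p} everywhere. Let ρ be a metric and h : Z → R^p be L_h-Lipschitz w.r.t. ρ, κ : R_+ → [0,1] a nonincreasing kernel with κ(u)=0 for u>1, and V_κ = ∫_{R^p_+} κ(‖y‖_∞)dy. Then for any z, E[ κ(ρ(z, g(X))/γ)^2 ] ≤ (γ L_h / r̄)^p V_κ, where g satisfies h(g(y)) = y. -/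
open MeasureTheory

/-!
Since `h ∘ g = id` and `h` is `L_h`-Lipschitz, `‖X - h z‖ ≤ L_h ρ(z, g X)`; as `κ` is
nonincreasing and `κ² ≤ κ`, the integrand is at most `(2r̄)⁻ᵖ κ(‖y - h z‖ / (γ L_h))`. A
translation and the dilation by `γ L_h` turn the integral of the latter into
`(γ L_h)ᵖ ∫ κ(‖y‖) dy`, and reflecting the coordinates (the map `y ↦ (|yᵢ|)ᵢ` pushes Lebesgue
measure forward to `2ᵖ` times its restriction to the orthant) makes this `(2 γ L_h)ᵖ V_κ`.
-/

open Set Module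
open scoped NNReal

theorem Real.map_abs_volume :
    volume.map (fun x : ℝ => |x|) = (2 : ℝ≥0) • volume.restrict (Ici 0) := by
  have hneg : (volume.restrict (Iio (0 : ℝ))).map Neg.neg = volume.restrict (Ici 0) := by
    have : Iio (0 : ℝ) = Neg.neg ⁻¹' Ioi 0 := by ext; simp
    rw [this, ← measurableEmbedding_neg.restrict_map, Measure.map_neg_eq_self,
      Measure.restrict_congr_set Ioi_ae_eq_Ici]
  have hIci : (fun x : ℝ => |x|) =ᵐ[volume.restrict (Ici 0)] id :=
    (ae_restrict_mem measurableSet_Ici).mono fun x hx => abs_of_nonneg hx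
  have hIio : (fun x : ℝ => |x|) =ᵐ[volume.restrict (Iio 0)] Neg.neg :=
    (ae_restrict_mem measurableSet_Iio).mono fun x hx => abs_of_neg hx
  conv_lhs =>
    rw [← Measure.restrict_add_restrict_compl (μ := volume) (s := Ici 0) measurableSet_Ici]
  rw [compl_Ici, Measure.map_add _ _ measurable_abs, Measure.map_congr hIci,
    Measure.map_congr hIio, Measure.map_id, hneg, two_smul]

theorem MeasureTheory.Measure.pi_smul {ι : Type*} [Fintype ι] {α : ι → Type*}
    [∀ i, MeasurableSpace (α i)] (μ : ∀ i, Measure (α i)) [∀ i, SigmaFinite (μ i)]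
    (c : ι → ℝ≥0) :
    Measure.pi (fun i => c i • μ i) = (∏ i, c i) • Measure.pi μ := by
  refine Measure.pi_eq (μ := fun i => c i • μ i) fun s _ => ?_
  simp only [Measure.smul_apply, Measure.pi_pi, ENNReal.smul_def, smul_eq_mul,
    ENNReal.ofNNReal_finsetProd, Finset.prod_mul_distrib]

theorem map_abs_pi_volume {ι : Type*} [Fintype ι] :
    volume.map (fun (y : ι → ℝ) i => |y i|)
      = (2 : ℝ≥0) ^ Fintype.card ι • volume.restrict (Ici (0 : ι → ℝ)) := by
  have : SigmaFinite (volume.map fun x : ℝ => |x|) := by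
    rw [Real.map_abs_volume]; infer_instance
  rw [volume_pi, Measure.pi_map_pi fun _ => measurable_abs.aemeasurable, Real.map_abs_volume,
    Measure.pi_smul, ← pi_univ_Ici, Measure.restrict_pi_pi, Finset.prod_const, Finset.card_univ]
  rfl

theorem integral_comp_abs_pi {ι E : Type*} [Fintype ι] [NormedAddCommGroup E] [NormedSpace ℝ E]
    {F : (ι → ℝ) → E} (hF : AEStronglyMeasurable F (volume.restrict (Ici 0))) :
    ∫ y : ι → ℝ, F (fun i => |y i|) = (2 : ℝ) ^ Fintype.card ι • ∫ y in Ici 0, F y := by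
  have hmeas : Measurable fun (y : ι → ℝ) i => |y i| := by fun_prop
  have hF' : AEStronglyMeasurable F (volume.map fun (y : ι → ℝ) i => |y i|) := by
    rw [map_abs_pi_volume]; exact hF.smul_measure _
  rw [← integral_map hmeas.aemeasurable hF', map_abs_pi_volume, integral_smul_nnreal_measure,
    NNReal.smul_def, NNReal.coe_pow, NNReal.coe_two]

theorem integral_comp_norm_pi {ι E : Type*} [Fintype ι] [NormedAddCommGroup E]
    [NormedSpace ℝ E] {φ : ℝ → E} (hφ : StronglyMeasurable φ) :
    ∫ y : ι → ℝ, φ ‖y‖ = (2 : ℝ) ^ Fintype.card ι • ∫ y in Ici (0 : ι → ℝ), φ ‖y‖ := by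
  rw [← integral_comp_abs_pi (F := fun y => φ ‖y‖)
    (hφ.comp_measurable measurable_norm).aestronglyMeasurable]
  simp [Pi.norm_def]

theorem integral_comp_norm_sub_div {E F : Type*} [NormedAddCommGroup E] [NormedSpace ℝ E]
    [FiniteDimensional ℝ E] [MeasurableSpace E] [BorelSpace E] (μ : Measure E)
    [μ.IsAddHaarMeasure] [NormedAddCommGroup F] [NormedSpace ℝ F]
    (φ : ℝ → F) (a : E) {c : ℝ} (hc : 0 ≤ c) :
    ∫ y, φ (‖y - a‖ / c) ∂μ = c ^ finrank ℝ E • ∫ x, φ ‖x‖ ∂μ := by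
  have hscale : ∀ x : E, φ (‖x‖ / c) = φ ‖c⁻¹ • x‖ := fun x => by
    rw [norm_smul, norm_inv, Real.norm_of_nonneg hc, inv_mul_eq_div]
  rw [integral_sub_right_eq_self (fun x => φ (‖x‖ / c)) a]
  simp_rw [hscale]
  exact Measure.integral_comp_inv_smul_of_nonneg μ (fun x => φ ‖x‖) hc

theorem integrable_comp_norm_sub_div {E : Type*} [NormedAddCommGroup E] [NormedSpace ℝ E]
    [FiniteDimensional ℝ E] [MeasurableSpace E] [BorelSpace E] (μ : Measure E)
    [μ.IsAddHaarMeasure] {φ : ℝ → ℝ} (hφ : Measurable φ) {B : ℝ}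
    (hbdd : ∀ u, 0 ≤ u → |φ u| ≤ B) (hvanish : ∀ u, 1 < u → φ u = 0) (a : E) {c : ℝ}
    (hc : 0 < c) :
    Integrable (fun y => φ (‖y - a‖ / c)) μ := by
  have hsupp : Function.support (fun y => φ (‖y - a‖ / c)) ⊆ Metric.closedBall a c := by
    intro y hy
    by_contra hfar
    rw [Metric.mem_closedBall, dist_eq_norm, not_le, ← one_lt_div hc] at hfar
    exact hy (hvanish _ hfar)
  rw [← integrableOn_iff_integrable_of_support_subset hsupp]
  refine Measure.integrableOn_of_bounded measure_closedBall_lt_top.ne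
    (hφ.comp (by fun_prop)).aestronglyMeasurable (M := B) (Filter.Eventually.of_forall fun y => ?_)
  exact hbdd _ (by positivity)

theorem norm_sub_div_le_dist_div {Z E : Type*} [PseudoMetricSpace Z] [SeminormedAddCommGroup E]
    {h : Z → E} {L γ : ℝ} (hγ : 0 < γ) (hL : 0 < L)
    (hLip : ∀ z z', ‖h z - h z'‖ ≤ L * dist z z') (z z' : Z) :
    ‖h z' - h z‖ / (γ * L) ≤ dist z z' / γ := by
  rw [div_le_div_iff₀ (by positivity) hγ, norm_sub_rev]
  nlinarith [hLip z z']

theorem sq_comp_dist_div_le_comp_norm_sub_div {Z E : Type*} [PseudoMetricSpace Z]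
    [SeminormedAddCommGroup E] {κ : ℝ → ℝ} (hrange : ∀ u, 0 ≤ u → κ u ∈ Icc (0 : ℝ) 1)
    (hmono : ∀ u v, 0 ≤ u → u ≤ v → κ v ≤ κ u) {g : E → Z} {h : Z → E}
    (hinv : ∀ y, h (g y) = y) {L γ : ℝ} (hγ : 0 < γ) (hL : 0 < L)
    (hLip : ∀ z z', ‖h z - h z'‖ ≤ L * dist z z') (z : Z) (y : E) :
    κ (dist z (g y) / γ) ^ 2 ≤ κ (‖y - h z‖ / (γ * L)) := by
  have hv : 0 ≤ ‖y - h z‖ / (γ * L) := by positivity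
  have hvu : ‖y - h z‖ / (γ * L) ≤ dist z (g y) / γ := by
    simpa only [hinv] using norm_sub_div_le_dist_div hγ hL hLip z (g y)
  obtain ⟨hκ0, hκ1⟩ := hrange _ (hv.trans hvu)
  exact (pow_le_of_le_one hκ0 hκ1 two_ne_zero).trans (hmono _ _ hv hvu)

theorem stmt_8_general {Z : Type*} [MetricSpace Z] {p : ℕ}
    (rbar γ Lh : ℝ) (hr : 0 < rbar) (hγ : 0 < γ) (hLh : 0 < Lh)
    (f : (Fin p → ℝ) → ℝ) (hf_nonneg : ∀ y, 0 ≤ f y)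
    (hf_ub : ∀ y, f y ≤ ((2 * rbar) ^ p)⁻¹)
    (g : (Fin p → ℝ) → Z) (h : Z → (Fin p → ℝ))
    (hinv : ∀ y, h (g y) = y)
    (hLiph : ∀ z z', ‖h z - h z'‖ ≤ Lh * dist z z')
    (κ : ℝ → ℝ) (hκ_meas : Measurable κ)
    (hrange : ∀ u, 0 ≤ u → κ u ∈ Set.Icc (0:ℝ) 1)
    (hmono : ∀ u v, 0 ≤ u → u ≤ v → κ v ≤ κ u)
    (hvanish : ∀ u, 1 < u → κ u = 0)
    (Vκ : ℝ) (hV : Vκ = ∫ y in {y : Fin p → ℝ | ∀ i, 0 ≤ y i}, κ ‖y‖)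
    (z : Z) :
    ∫ y, (κ (dist z (g y) / γ)) ^ 2 * f y ≤ (γ * Lh / rbar) ^ p * Vκ := by
  have hc : 0 < γ * Lh := mul_pos hγ hLh
  have hpt (y : Fin p → ℝ) :
      κ (dist z (g y) / γ) ^ 2 * f y ≤ ((2 * rbar) ^ p)⁻¹ * κ (‖y - h z‖ / (γ * Lh)) := by
    rw [mul_comm _ (κ _)]
    exact mul_le_mul
      (sq_comp_dist_div_le_comp_norm_sub_div hrange hmono hinv hγ hLh hLiph z y) (hf_ub y)
      (hf_nonneg y) (hrange _ (by positivity)).1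
  have hint : Integrable fun y => ((2 * rbar) ^ p)⁻¹ * κ (‖y - h z‖ / (γ * Lh)) :=
    (integrable_comp_norm_sub_div volume hκ_meas
      (fun u hu => abs_le.2 ⟨by linarith [(hrange u hu).1], (hrange u hu).2⟩) hvanish
      (h z) hc).const_mul _
  calc ∫ y, κ (dist z (g y) / γ) ^ 2 * f y
      ≤ ∫ y, ((2 * rbar) ^ p)⁻¹ * κ (‖y - h z‖ / (γ * Lh)) :=
        integral_mono_of_nonneg
          (Filter.Eventually.of_forall fun y => mul_nonneg (sq_nonneg _) (hf_nonneg y)) hint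
          (Filter.Eventually.of_forall hpt)
    _ = ((2 * rbar) ^ p)⁻¹ * ((γ * Lh) ^ p * (2 ^ p * Vκ)) := by
        rw [integral_const_mul, integral_comp_norm_sub_div volume κ (h z) hc.le, finrank_fin_fun,
          integral_comp_norm_pi hκ_meas.stronglyMeasurable, Fintype.card_fin, hV, smul_eq_mul,
          smul_eq_mul]
        rfl
    _ = (γ * Lh / rbar) ^ p * Vκ := by
        rw [mul_pow, div_pow, mul_pow]
        field_simp

/-- Upper bound on the second moment of the kernel weight: if the density `f` of
`X` is bounded above by `(2rbar)⁻ᵖ`, `h` is `L_h`-Lipschitz with `h ∘ g = id`, and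
`κ : ℝ₊ → [0,1]` is nonincreasing with `κ(u) = 0` for `u > 1`, then
`E[κ(ρ(z, g(X))/γ)²] ≤ (γ L_h / rbar)ᵖ V_κ`. -/
theorem stmt_8 {Z : Type*} [MetricSpace Z] {p : ℕ}
    (rbar γ Lh : ℝ) (hr : 0 < rbar) (hγ : 0 < γ) (hLh : 0 < Lh)
    (f : (Fin p → ℝ) → ℝ) (hf_meas : Measurable f) (hf_nonneg : ∀ y, 0 ≤ f y)
    (hf_int : Integrable f) (hf_prob : ∫ y, f y = 1)
    (hf_ub : ∀ y, f y ≤ ((2 * rbar) ^ p)⁻¹)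
    (g : (Fin p → ℝ) → Z) (h : Z → (Fin p → ℝ))
    (hinv : ∀ y, h (g y) = y)
    (hLiph : ∀ z z', ‖h z - h z'‖ ≤ Lh * dist z z')
    (κ : ℝ → ℝ) (hκ_meas : Measurable κ)
    (hrange : ∀ u, 0 ≤ u → κ u ∈ Set.Icc (0:ℝ) 1)
    (hmono : ∀ u v, 0 ≤ u → u ≤ v → κ v ≤ κ u)
    (hvanish : ∀ u, 1 < u → κ u = 0)
    (Vκ : ℝ) (hV : Vκ = ∫ y in {y : Fin p → ℝ | ∀ i, 0 ≤ y i}, κ ‖y‖)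
    (z : Z) :
    ∫ y, (κ (dist z (g y) / γ)) ^ 2 * f y ≤ (γ * Lh / rbar) ^ p * Vκ :=
  stmt_8_general rbar γ Lh hr hγ hLh f hf_nonneg hf_ub g h hinv hLiph κ hκ_meas hrange hmono hvanish
    Vκ hV z
end
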